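/- There exists a natural number N such that for every even n ≥ N, the number of pairs (α, β) ∈ F_n × F_n such that α and β share a common orbit is at least (1/3)·|F_n|²; i.e., two independent uniformly random elements of F_n share a common orbit with probability at least 1/3. -/

import Mathlib

open scoped Classical

/-- The set of fixed-point-free involutions of `{1,…,n}` (modeled on `Fin n`). -/
noncomputable def fpf (n : ℕ) : Finset (Equiv.Perm (Fin n)) :=
  Finset.univ.filter (fun σ => σ * σ = 1 ∧ ∀ i, σ i ≠ i)

/-!
Let `X(α, β)` count the transpositions `(i j)`, `i < j`, common to `α` and `β`; the pair shares an
orbit iff `X ≥ 1`, and `3X ≤ 2·[X ≥ 1] + X²` pointwise (a second Bonferroni inequality).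
Conjugating by transpositions shows that a fixed transposition lies in exactly `|F_n|/(n-1)`
elements of `F_n`, and two disjoint ones in `|F_n|/((n-1)(n-3))`. Hence `E X → 1/2` and
`E X² ≤ E X + (n choose 2)² / ((n-1)(n-3))² → 3/4` (the expectations are over independent
uniform `α, β ∈ F_n`), so the proportion of sharing pairs is at
least `(3 E X - E X²)/2 → 3/8 > 1/3`; the resulting cubic inequality holds from `n = 14` on.
-/

open Finset Equiv

section Bonferroni

variable {Ω ι : Type*}

lemma three_mul_le_two_mul_ite_add_sq (x : ℕ) : 3 * x ≤ 2 * (if 0 < x then 1 else 0) + x ^ 2 := by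
  rcases Nat.lt_or_ge x 3 with hx | hx
  · interval_cases x <;> simp
  · simp only [show 0 < x by omega, if_true]
    nlinarith

lemma card_filter_exists_bonferroni (P : Finset Ω) (E : Finset ι) (A : ι → Ω → Prop)
    [∀ e, DecidablePred (A e)] :
    3 * ∑ e ∈ E, #(P.filter (A e)) ≤
      2 * #(P.filter fun ω => ∃ e ∈ E, A e ω) +
        ∑ e ∈ E, ∑ e' ∈ E, #(P.filter fun ω => A e ω ∧ A e' ω) := by
  set X : Ω → ℕ := fun ω => #(E.filter (A · ω))
  have hfirst : ∑ e ∈ E, #(P.filter (A e)) = ∑ ω ∈ P, X ω :=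
    (sum_card_bipartiteAbove_eq_sum_card_bipartiteBelow (r := fun ω e => A e ω)).symm
  have hsecond : ∑ e ∈ E, ∑ e' ∈ E, #(P.filter fun ω => A e ω ∧ A e' ω) = ∑ ω ∈ P, X ω ^ 2 := by
    calc ∑ e ∈ E, ∑ e' ∈ E, #(P.filter fun ω => A e ω ∧ A e' ω)
        = ∑ ee ∈ E ×ˢ E, #(P.filter fun ω => A ee.1 ω ∧ A ee.2 ω) := (sum_product' _ _ _).symm
      _ = ∑ ω ∈ P, #((E ×ˢ E).filter fun ee => A ee.1 ω ∧ A ee.2 ω) :=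
        (sum_card_bipartiteAbove_eq_sum_card_bipartiteBelow (r := fun ω (ee : ι × ι) => _)).symm
      _ = ∑ ω ∈ P, X ω ^ 2 := sum_congr rfl fun ω _ => by
        rw [filter_product (A · ω) (A · ω), card_product, sq]
  have hexists : #(P.filter fun ω => ∃ e ∈ E, A e ω) = ∑ ω ∈ P, if 0 < X ω then 1 else 0 := by
    rw [card_filter]
    refine sum_congr rfl fun ω _ => ?_
    simp only [X, card_pos, filter_nonempty_iff]
  rw [hfirst, hsecond, hexists, mul_sum, mul_sum, ← sum_add_distrib]
  exact sum_le_sum fun ω _ => three_mul_le_two_mul_ite_add_sq (X ω)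

lemma bonferroni_of_uniform_bounds (P : Finset Ω) (E : Finset ι) (A : ι → Ω → Prop)
    [∀ e, DecidablePred (A e)] {a b : ℝ} (ha : ∀ e ∈ E, (#(P.filter (A e)) : ℝ) = a)
    (hb : ∀ e ∈ E, ∀ e' ∈ E, e ≠ e' → (#(P.filter fun ω => A e ω ∧ A e' ω) : ℝ) ≤ b) :
    2 * #E * a ≤ 2 * #(P.filter fun ω => ∃ e ∈ E, A e ω) + #E * (#E - 1) * b := by
  have hfirst : ∑ e ∈ E, (#(P.filter (A e)) : ℝ) = #E * a := by
    rw [sum_congr rfl ha, sum_const, nsmul_eq_mul]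
  have hsecond : ∑ e ∈ E, ∑ e' ∈ E, (#(P.filter fun ω => A e ω ∧ A e' ω) : ℝ) ≤
      #E * (a + (#E - 1) * b) := by
    rw [← nsmul_eq_mul, ← sum_const]
    refine sum_le_sum fun e he => ?_
    rw [← add_sum_erase _ _ he]
    simp only [and_self]
    gcongr
    · exact (ha e he).le
    · calc ∑ e' ∈ E.erase e, (#(P.filter fun ω => A e ω ∧ A e' ω) : ℝ)
          ≤ ∑ e' ∈ E.erase e, b :=
            sum_le_sum fun e' he' => hb e he e' (mem_of_mem_erase he') (ne_of_mem_erase he').symm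
        _ = (#E - 1) * b := by rw [sum_const, nsmul_eq_mul, card_erase_of_mem he,
            Nat.cast_sub (card_pos.2 ⟨e, he⟩), Nat.cast_one]
  have hbonferroni : 3 * ∑ e ∈ E, (#(P.filter (A e)) : ℝ) ≤
      2 * #(P.filter fun ω => ∃ e ∈ E, A e ω) +
        ∑ e ∈ E, ∑ e' ∈ E, (#(P.filter fun ω => A e ω ∧ A e' ω) : ℝ) := by
    exact_mod_cast card_filter_exists_bonferroni P E A
  linarith

end Bonferroni

section SwapSymmetry

variable {α : Type*} [DecidableEq α]

lemma card_filter_apply_eq_eq_of_swap_conj {s : Finset (Perm α)} {k b b' : α}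
    (hb : b ≠ k) (hb' : b' ≠ k) (hs : ∀ σ ∈ s, swap b b' * σ * swap b b' ∈ s) :
    #(s.filter (· k = b)) = #(s.filter (· k = b')) := by
  have hk : swap b b' k = k := swap_apply_of_ne_of_ne hb.symm hb'.symm
  have hinv : ∀ σ : Perm α, swap b b' * (swap b b' * σ * swap b b') * swap b b' = σ := fun σ => by
    simp [mul_assoc]
  refine card_nbij' (fun σ => swap b b' * σ * swap b b') (fun σ => swap b b' * σ * swap b b')
    ?_ ?_ (fun σ _ => hinv σ) (fun σ _ => hinv σ)
  all_goals
    intro σ hσ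
    rw [mem_coe, mem_filter] at hσ ⊢
    exact ⟨hs σ hσ.1, by simp [hk, hσ.2]⟩

lemma card_eq_card_mul_card_filter_apply_eq {s : Finset (Perm α)} {t : Finset α}
    {k c : α} (hk : k ∉ t) (hc : c ∈ t) (hmaps : ∀ σ ∈ s, σ k ∈ t)
    (hs : ∀ σ ∈ s, ∀ b ∈ t, ∀ b' ∈ t, swap b b' * σ * swap b b' ∈ s) :
    #s = #t * #(s.filter (· k = c)) := by
  rw [card_eq_sum_card_fiberwise hmaps]
  refine sum_const_nat fun b hb => card_filter_apply_eq_eq_of_swap_conj ?_ ?_ ?_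
  · exact ne_of_mem_of_not_mem hb hk
  · exact ne_of_mem_of_not_mem hc hk
  · exact fun σ hσ => hs σ hσ b hb c hc

end SwapSymmetry

section FixedPointFreeInvolutions

variable {n : ℕ} {σ : Perm (Fin n)}

lemma mem_fpf : σ ∈ fpf n ↔ σ * σ = 1 ∧ ∀ i, σ i ≠ i := by
  simp [fpf]

lemma apply_apply_of_mem_fpf (hσ : σ ∈ fpf n) (i : Fin n) : σ (σ i) = i := by
  rw [← Perm.mul_apply, (mem_fpf.1 hσ).1, Perm.one_apply]

lemma conj_mem_fpf (hσ : σ ∈ fpf n) (τ : Perm (Fin n)) : τ * σ * τ⁻¹ ∈ fpf n := by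
  obtain ⟨hinv, hfree⟩ := mem_fpf.1 hσ
  refine mem_fpf.2 ⟨?_, fun i hi => hfree (τ⁻¹ i) ?_⟩
  · rw [show τ * σ * τ⁻¹ * (τ * σ * τ⁻¹) = τ * (σ * σ) * τ⁻¹ by group, hinv]
    group
  · rw [Perm.mul_apply, Perm.mul_apply] at hi
    exact Perm.eq_inv_iff_eq.2 hi

lemma swap_conj_mem_fpf (hσ : σ ∈ fpf n) (b b' : Fin n) : swap b b' * σ * swap b b' ∈ fpf n := by
  simpa using conj_mem_fpf hσ (swap b b')

end FixedPointFreeInvolutions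

section Counting

variable {n : ℕ}

lemma card_fpf_eq_mul_card_filter {i j : Fin n} (hij : i ≠ j) :
    #(fpf n) = (n - 1) * #((fpf n).filter (· i = j)) := by
  rw [card_eq_card_mul_card_filter_apply_eq (t := univ.erase i) (notMem_erase i univ)
      (mem_erase.2 ⟨hij.symm, mem_univ j⟩)
      (fun σ hσ => mem_erase.2 ⟨(mem_fpf.1 hσ).2 i, mem_univ _⟩)
      (fun σ hσ b _ b' _ => swap_conj_mem_fpf hσ b b'),
    card_erase_of_mem (mem_univ i), card_univ, Fintype.card_fin]

lemma card_filter_fpf_eq_mul_card_filter {i j k l : Fin n} (hij : i ≠ j) (hki : k ≠ i)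
    (hkj : k ≠ j) (hl : l ∉ ({i, j, k} : Finset (Fin n))) :
    #((fpf n).filter (· i = j)) = (n - 3) * #(((fpf n).filter (· i = j)).filter (· k = l)) := by
  have hcard : #(univ \ ({i, j, k} : Finset (Fin n))) = n - 3 := by
    rw [card_univ_sdiff, Fintype.card_fin, card_insert_of_notMem (by simp [hij, hki.symm]),
      card_pair hkj.symm]
  rw [← hcard]
  refine card_eq_card_mul_card_filter_apply_eq (by simp) (by simpa using hl) ?_ ?_
  · intro σ hσ
    obtain ⟨hσ, hσi⟩ := mem_filter.1 hσ
    have hσj : σ j = i := by rw [← hσi, apply_apply_of_mem_fpf hσ]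
    simp only [mem_sdiff, mem_univ, mem_insert, mem_singleton, true_and, not_or]
    refine ⟨fun h => hkj ?_, fun h => hki ?_, (mem_fpf.1 hσ).2 k⟩
    · rw [← apply_apply_of_mem_fpf hσ k, h, hσi]
    · rw [← apply_apply_of_mem_fpf hσ k, h, hσj]
  · intro σ hσ b hb b' hb'
    obtain ⟨hσ, hσi⟩ := mem_filter.1 hσ
    simp only [mem_sdiff, mem_univ, mem_insert, mem_singleton, true_and, not_or] at hb hb'
    refine mem_filter.2 ⟨swap_conj_mem_fpf hσ b b', ?_⟩
    simp [swap_apply_of_ne_of_ne, hσi, hb.1, hb'.1, hb.2.1, hb'.2.1, Ne.symm]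

lemma distinct_of_apply_eq_of_lt {σ : Perm (Fin n)} (hσ : σ ∈ fpf n) {i j k l : Fin n}
    (hij : i < j) (hkl : k < l) (hσi : σ i = j) (hσk : σ k = l) (hne : (i, j) ≠ (k, l)) :
    k ≠ i ∧ k ≠ j ∧ l ∉ ({i, j, k} : Finset (Fin n)) := by
  have hσj : σ j = i := by rw [← hσi, apply_apply_of_mem_fpf hσ]
  have hσl : σ l = k := by rw [← hσk, apply_apply_of_mem_fpf hσ]
  simp only [mem_insert, mem_singleton, not_or]
  refine ⟨?_, ?_, ?_, ?_, fun hlk => (mem_fpf.1 hσ).2 k (hσk.trans hlk)⟩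
  · rintro rfl
    exact hne (by rw [← hσi, hσk])
  · intro hk
    have : l = i := by rw [← hσk, hk, hσj]
    omega
  · intro hl
    have : k = j := by rw [← hσl, hl, hσi]
    omega
  · rintro rfl
    exact hne (by rw [← hσl, hσj])

end Counting

lemma card_filter_product_self {β : Type*} (s : Finset β) (P : β → Prop) [DecidablePred P] :
    #((s ×ˢ s).filter fun p => P p.1 ∧ P p.2) = #(s.filter P) ^ 2 := by
  rw [filter_product, card_product, sq]

section CommonTranspositions

variable {n : ℕ}

lemma exists_apply_eq_iff_exists_common_pair {α β : Perm (Fin n)} (hα : α ∈ fpf n)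
    (hβ : β ∈ fpf n) :
    (∃ i, α i = β i) ↔
      ∃ q ∈ univ.filter (fun q : Fin n × Fin n => q.1 < q.2), α q.1 = q.2 ∧ β q.1 = q.2 := by
  constructor
  · rintro ⟨i, hi⟩
    rcases lt_or_gt_of_ne ((mem_fpf.1 hα).2 i) with hlt | hgt
    · refine ⟨(α i, i), by simpa using hlt, apply_apply_of_mem_fpf hα i, ?_⟩
      rw [hi, apply_apply_of_mem_fpf hβ]
    · exact ⟨(i, α i), by simpa using hgt, rfl, hi.symm⟩
  · rintro ⟨q, -, hαq, hβq⟩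
    exact ⟨q.1, hαq.trans hβq.symm⟩

lemma card_filter_common_pair_eq {q : Fin n × Fin n} (hq : q.1 ≠ q.2) :
    (#((fpf n ×ˢ fpf n).filter fun p => p.1 q.1 = q.2 ∧ p.2 q.1 = q.2) : ℝ) =
      (#(fpf n) / (n - 1)) ^ 2 := by
  have hn : 1 < n := by omega
  have hpos : (n : ℝ) - 1 ≠ 0 := by
    rw [sub_ne_zero]
    exact_mod_cast hn.ne'
  rw [card_filter_product_self (fpf n) (· q.1 = q.2), card_fpf_eq_mul_card_filter hq,
    Nat.cast_pow, Nat.cast_mul, Nat.cast_sub hn.le, Nat.cast_one, mul_div_cancel_left₀ _ hpos]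

lemma card_filter_filter_fpf_mul_le {q q' : Fin n × Fin n} (hq : q.1 < q.2) (hq' : q'.1 < q'.2)
    (hne : q ≠ q') :
    (n - 1) * ((n - 3) * #(((fpf n).filter (· q.1 = q.2)).filter (· q'.1 = q'.2))) ≤ #(fpf n) := by
  rcases (((fpf n).filter (· q.1 = q.2)).filter (· q'.1 = q'.2)).eq_empty_or_nonempty
    with hM | ⟨σ, hσ⟩
  · simp [hM]
  simp only [mem_filter] at hσ
  obtain ⟨⟨hσ, hσq⟩, hσq'⟩ := hσ
  obtain ⟨hki, hkj, hl⟩ := distinct_of_apply_eq_of_lt hσ hq hq' hσq hσq' hne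
  rw [card_fpf_eq_mul_card_filter hq.ne, card_filter_fpf_eq_mul_card_filter hq.ne hki hkj hl]

lemma card_filter_two_common_pairs_le (hn : 4 ≤ n) {q q' : Fin n × Fin n} (hq : q.1 < q.2)
    (hq' : q'.1 < q'.2) (hne : q ≠ q') :
    (#((fpf n ×ˢ fpf n).filter fun p =>
        (p.1 q.1 = q.2 ∧ p.2 q.1 = q.2) ∧ (p.1 q'.1 = q'.2 ∧ p.2 q'.1 = q'.2)) : ℝ) ≤
      (#(fpf n) / ((n - 1) * (n - 3))) ^ 2 := by
  have hprod : ((fpf n ×ˢ fpf n).filter fun p =>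
      (p.1 q.1 = q.2 ∧ p.2 q.1 = q.2) ∧ (p.1 q'.1 = q'.2 ∧ p.2 q'.1 = q'.2)) =
      (fpf n ×ˢ fpf n).filter fun p =>
        (p.1 q.1 = q.2 ∧ p.1 q'.1 = q'.2) ∧ (p.2 q.1 = q.2 ∧ p.2 q'.1 = q'.2) :=
    filter_congr fun _ _ => and_and_and_comm
  rw [hprod, card_filter_product_self (fpf n) (fun α => α q.1 = q.2 ∧ α q'.1 = q'.2),
    ← filter_filter, Nat.cast_pow]
  gcongr
  have hden : 0 < ((n : ℝ) - 1) * (n - 3) := by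
    have : (4 : ℝ) ≤ n := by exact_mod_cast hn
    nlinarith
  rw [le_div_iff₀ hden]
  have h := card_filter_filter_fpf_mul_le hq hq' hne
  rw [← Nat.cast_le (α := ℝ)] at h
  push_cast [Nat.cast_sub (by omega : 1 ≤ n), Nat.cast_sub (by omega : 3 ≤ n)] at h
  linarith

end CommonTranspositions

lemma third_le_of_second_moment_bound {n f S : ℝ} (hn : 14 ≤ n)
    (h : 2 * (n * (n - 1) / 2) * (f / (n - 1)) ^ 2 ≤
      2 * S + n * (n - 1) / 2 * (n * (n - 1) / 2 - 1) * (f / ((n - 1) * (n - 3))) ^ 2) :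
    1 / 3 * f ^ 2 ≤ S := by
  have h1 : n - 1 ≠ 0 := by linarith
  have h3 : n - 3 ≠ 0 := by linarith
  have hcubic : 0 ≤ n ^ 3 - 13 * n ^ 2 - 6 * n + 72 := by nlinarith [sq_nonneg (n - 14)]
  have hgap : 2 * (n * (n - 1) / 2) * (f / (n - 1)) ^ 2 -
      n * (n - 1) / 2 * (n * (n - 1) / 2 - 1) * (f / ((n - 1) * (n - 3))) ^ 2 - 2 / 3 * f ^ 2 =
      f ^ 2 * (n ^ 3 - 13 * n ^ 2 - 6 * n + 72) / (12 * (n - 1) * (n - 3) ^ 2) := by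
    field_simp
    ring
  have : 0 ≤ f ^ 2 * (n ^ 3 - 13 * n ^ 2 - 6 * n + 72) / (12 * (n - 1) * (n - 3) ^ 2) := by
    apply div_nonneg (mul_nonneg (sq_nonneg f) hcubic)
    nlinarith
  linarith

/-- There exists `N` such that for every even `n ≥ N`, the number of pairs
`(α, β) ∈ F_n × F_n` sharing a common orbit is at least `(1/3)·|F_n|²`. -/
theorem exists_N_prob_sharing_orbit_ge_third :
    ∃ N : ℕ, ∀ n : ℕ, Even n → N ≤ n →
      (1 / 3 : ℝ) * ((fpf n).card : ℝ) ^ 2 ≤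
        ((((fpf n) ×ˢ (fpf n)).filter (fun p => ∃ i, p.1 i = p.2 i)).card : ℝ) := by
  refine ⟨14, fun n _ hn => ?_⟩
  refine third_le_of_second_moment_bound (n := n) (by exact_mod_cast hn) ?_
  set E := univ.filter fun q : Fin n × Fin n => q.1 < q.2
  have hE : (#E : ℝ) = n * (n - 1) / 2 := by
    rw [Fintype.card_product_filter_lt, Fintype.card_fin, Nat.cast_choose_two]
  have hshare : ((fpf n ×ˢ fpf n).filter fun p => ∃ i, p.1 i = p.2 i) =
      (fpf n ×ˢ fpf n).filter fun p => ∃ q ∈ E, p.1 q.1 = q.2 ∧ p.2 q.1 = q.2 :=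
    filter_congr fun p hp =>
      exists_apply_eq_iff_exists_common_pair (mem_product.1 hp).1 (mem_product.1 hp).2
  rw [hshare, ← hE]
  exact bonferroni_of_uniform_bounds (fpf n ×ˢ fpf n) E
    (fun q p => p.1 q.1 = q.2 ∧ p.2 q.1 = q.2)
    (fun q hq => card_filter_common_pair_eq (mem_filter.1 hq).2.ne)
    (fun q hq q' hq' hne =>
      card_filter_two_common_pairs_le (by omega) (mem_filter.1 hq).2 (mem_filter.1 hq').2 hne)
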